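/- For every fixed x_θ ≥ 0, the function x_b ↦ F(x_b, x_θ) is concave on [0, ∞). Furthermore: (i) F(0, x_θ) = 0, and (ii) F(x_θ, x_θ) = x_θ. -/

import Mathlib

open MeasureTheory Real Filter

/-- Standard one-dimensional Gaussian pdf. -/
noncomputable def phi1 (x : ℝ) : ℝ := (Real.sqrt (2 * π))⁻¹ * Real.exp (-x ^ 2 / 2)

/-- `w(y, b) = e^{yb}/(e^{yb} + e^{−yb})`. -/
noncomputable def wgt (y b : ℝ) : ℝ :=
  Real.exp (y * b) / (Real.exp (y * b) + Real.exp (-(y * b)))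

/-- `P(x_a, x_b, x_θ) = ∫ w(y − x_a, x_b)·(φ(y − x_θ) + φ(y + x_θ))/2 dy`. -/
noncomputable def Pfun (xa xb xθ : ℝ) : ℝ :=
  ∫ y, wgt (y - xa) xb * ((phi1 (y - xθ) + phi1 (y + xθ)) / 2)

/-- `Γ(x_a, x_b, x_θ) = ∫ w(y − x_a, x_b)·y·(φ(y − x_θ) + φ(y + x_θ))/2 dy`. -/
noncomputable def Gfun (xa xb xθ : ℝ) : ℝ :=
  ∫ y, wgt (y - xa) xb * y * ((phi1 (y - xθ) + phi1 (y + xθ)) / 2)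

/-- `F(x_b, x_θ) = ∫ (2 w(y + x_θ, x_b) − 1)·(y + x_θ)·φ(y) dy`. -/
noncomputable def Ffun (xb xθ : ℝ) : ℝ :=
  ∫ y, (2 * wgt (y + xθ) xb - 1) * (y + xθ) * phi1 y

/-- Standard Gaussian cdf. -/
noncomputable def PhiCdf (x : ℝ) : ℝ := ∫ y in Set.Iic x, phi1 y

/-!
Since `2 w(z, b) − 1 = tanh (z b)`, the substitution `x = y + x_θ` gives
`F(b, θ) = ∫ tanh (x b) · x · φ(x − θ) dx`. For fixed `x` the integrand is
`|x| tanh (|x| b) φ(x − θ)`, concave in `b ≥ 0` because `tanh` is concave on `[0, ∞)`, and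
integration preserves concavity. At `b = θ`, evenness of `x ↦ x tanh (x θ)` allows replacing
`φ(x − θ)` by the average of `φ(x − θ)` and `φ(x + θ)`; as
`tanh (x θ) (φ(x − θ) + φ(x + θ)) = φ(x − θ) − φ(x + θ)`, what remains is half the difference
of the means of `N(θ, 1)` and `N(−θ, 1)`, i.e. `θ`.
-/

open ProbabilityTheory

namespace Real

theorem hasDerivAt_tanh (x : ℝ) : HasDerivAt tanh (1 - tanh x ^ 2) x := by
  have h := (hasDerivAt_sinh x).div (hasDerivAt_cosh x) (cosh_pos x).ne'
  rw [show tanh = sinh / cosh from funext tanh_eq_sinh_div_cosh]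
  refine h.congr_deriv ?_
  have := (cosh_pos x).ne'
  rw [Pi.div_apply]
  field_simp

theorem continuous_tanh : Continuous tanh :=
  continuous_iff_continuousAt.2 fun x => (hasDerivAt_tanh x).continuousAt

theorem tanh_nonneg {x : ℝ} (hx : 0 ≤ x) : 0 ≤ tanh x := by
  rw [tanh_eq_sinh_div_cosh]
  exact div_nonneg (sinh_nonneg_iff.2 hx) (cosh_pos x).le

theorem concaveOn_tanh : ConcaveOn ℝ (Set.Ici 0) tanh := by
  refine concaveOn_of_hasDerivWithinAt2_nonpos (convex_Ici 0) continuous_tanh.continuousOn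
    (fun x _ => (hasDerivAt_tanh x).hasDerivWithinAt)
    (fun x _ => (((hasDerivAt_tanh x).pow 2).const_sub 1).hasDerivWithinAt) fun x hx => ?_
  rw [interior_Ici] at hx
  norm_num
  exact mul_nonneg (mul_nonneg zero_le_two (tanh_nonneg hx.le))
    (sub_nonneg.2 (tanh_sq_lt_one x).le)

end Real

theorem concaveOn_tanh_mul_mul (x : ℝ) : ConcaveOn ℝ (Set.Ici 0) fun b => tanh (x * b) * x := by
  have h : ConcaveOn ℝ (Set.Ici 0) fun b => tanh (|x| * b) :=
    (concaveOn_tanh.comp_linearMap (LinearMap.lsmul ℝ ℝ |x|)).subset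
      (fun b hb => mul_nonneg (abs_nonneg x) hb) (convex_Ici 0)
  refine (h.smul (abs_nonneg x)).congr fun b _ => ?_
  rcases abs_cases x with ⟨hx, _⟩ | ⟨hx, _⟩
  · simp only [hx, smul_eq_mul, mul_comm]
  · simp only [hx, smul_eq_mul, neg_mul, tanh_neg]
    ring

theorem ConcaveOn.integral {E α : Type*} [AddCommMonoid E] [Module ℝ E] [MeasurableSpace α]
    {μ : Measure α} {s : Set E} {f : E → α → ℝ} (hs : Convex ℝ s)
    (hf : ∀ᵐ y ∂μ, ConcaveOn ℝ s fun b => f b y) (hint : ∀ b ∈ s, Integrable (f b) μ) :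
    ConcaveOn ℝ s fun b => ∫ y, f b y ∂μ := by
  refine ⟨hs, fun p hp q hq a c ha hc hac => ?_⟩
  simp only [smul_eq_mul]
  rw [← integral_const_mul, ← integral_const_mul,
    ← integral_add ((hint p hp).const_mul a) ((hint q hq).const_mul c)]
  refine integral_mono_ae (((hint p hp).const_mul a).add ((hint q hq).const_mul c))
    (hint _ (hs hp hq ha hc hac)) ?_
  filter_upwards [hf] with y hy
  simpa only [smul_eq_mul] using hy.2 hp hq ha hc hac

theorem two_mul_wgt_sub_one (z b : ℝ) : 2 * wgt z b - 1 = tanh (z * b) := by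
  have : exp (z * b) + exp (-(z * b)) ≠ 0 := by positivity
  rw [tanh_eq, wgt]
  field_simp
  ring

theorem phi1_nonneg (x : ℝ) : 0 ≤ phi1 x := by
  unfold phi1
  positivity

theorem phi1_neg (x : ℝ) : phi1 (-x) = phi1 x := by
  rw [phi1, neg_sq, phi1]

theorem phi1_sub (a x : ℝ) : phi1 (x - a) = gaussianPDFReal a 1 x := by
  simp [phi1, gaussianPDFReal]

theorem integrable_mul_phi1_sub (a : ℝ) : Integrable fun x => x * phi1 (x - a) := by
  have h : Integrable id (gaussianReal a 1) := (memLp_id_gaussianReal 1).integrable le_rfl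
  rw [gaussianReal_of_var_ne_zero _ one_ne_zero,
    integrable_withDensity_iff_integrable_smul' (measurable_gaussianPDF a 1)
      (ae_of_all _ fun _ => gaussianPDF_lt_top)] at h
  refine h.congr (ae_of_all _ fun x => ?_)
  simp [gaussianPDF, phi1_sub, ENNReal.toReal_ofReal (gaussianPDFReal_nonneg _ _ _), mul_comm]

theorem integral_mul_phi1_sub (a : ℝ) : ∫ x, x * phi1 (x - a) = a := by
  simp_rw [phi1_sub, mul_comm _ (gaussianPDFReal _ _ _), ← smul_eq_mul,
    ← integral_gaussianReal_eq_integral_smul one_ne_zero]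
  exact integral_id_gaussianReal

theorem integrable_mul_phi1_add (a : ℝ) : Integrable fun x => x * phi1 (x + a) := by
  simpa only [sub_neg_eq_add] using integrable_mul_phi1_sub (-a)

theorem integral_mul_phi1_add (a : ℝ) : ∫ x, x * phi1 (x + a) = -a := by
  simpa only [sub_neg_eq_add] using integral_mul_phi1_sub (-a)

theorem integral_mul_phi1_sub_eq_integral_mul_phi1_add {g : ℝ → ℝ} (hg : ∀ x, g (-x) = g x)
    (a : ℝ) : ∫ x, g x * phi1 (x - a) = ∫ x, g x * phi1 (x + a) := by
  rw [← integral_neg_eq_self]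
  congr 1 with x
  rw [hg, ← phi1_neg, neg_sub, sub_neg_eq_add, add_comm]

theorem tanh_mul_phi1_sub_add_phi1_add (x θ : ℝ) :
    tanh (x * θ) * (phi1 (x - θ) + phi1 (x + θ)) = phi1 (x - θ) - phi1 (x + θ) := by
  have hsub : phi1 (x - θ) = phi1 x * exp (-θ ^ 2 / 2) * exp (x * θ) := by
    rw [phi1, phi1, mul_assoc, mul_assoc, ← exp_add, ← exp_add]
    ring_nf
  have hadd : phi1 (x + θ) = phi1 x * exp (-θ ^ 2 / 2) * exp (-(x * θ)) := by
    rw [phi1, phi1, mul_assoc, mul_assoc, ← exp_add, ← exp_add]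
    ring_nf
  have : exp (x * θ) + exp (-(x * θ)) ≠ 0 := by positivity
  rw [hsub, hadd, tanh_eq]
  field_simp

theorem integrable_tanh_mul_mul_phi1_sub (b a : ℝ) :
    Integrable fun x => tanh (x * b) * x * phi1 (x - a) := by
  have h := (integrable_mul_phi1_sub a).bdd_mul (c := 1)
    (continuous_tanh.comp (continuous_mul_const b)).aestronglyMeasurable
    (ae_of_all _ fun x => (abs_tanh_lt_one _).le)
  simpa only [Function.comp_apply, mul_assoc] using h

theorem Ffun_eq_integral_tanh (b θ : ℝ) :
    Ffun b θ = ∫ x, tanh (x * b) * x * phi1 (x - θ) := by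
  rw [Ffun, ← integral_add_right_eq_self (fun x => tanh (x * b) * x * phi1 (x - θ)) θ]
  simp only [two_mul_wgt_sub_one, add_sub_cancel_right]

theorem Ffun_self (θ : ℝ) : Ffun θ θ = θ := by
  have hsymm := integral_mul_phi1_sub_eq_integral_mul_phi1_add
    (g := fun x => tanh (x * θ) * x) (fun x => by rw [neg_mul, tanh_neg, neg_mul_neg]) θ
  have hint_add : Integrable fun x => tanh (x * θ) * x * phi1 (x + θ) := by
    simpa only [sub_neg_eq_add] using integrable_tanh_mul_mul_phi1_sub θ (-θ)
  have hsum : (∫ x, tanh (x * θ) * x * phi1 (x - θ)) + ∫ x, tanh (x * θ) * x * phi1 (x + θ)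
      = 2 * θ := calc
    _ = ∫ x, (x * phi1 (x - θ) - x * phi1 (x + θ)) := by
      rw [← integral_add (integrable_tanh_mul_mul_phi1_sub θ θ) hint_add]
      congr 1 with x
      linear_combination x * tanh_mul_phi1_sub_add_phi1_add x θ
    _ = 2 * θ := by
      rw [integral_sub (integrable_mul_phi1_sub θ) (integrable_mul_phi1_add θ),
        integral_mul_phi1_sub, integral_mul_phi1_add]
      ring
  rw [Ffun_eq_integral_tanh]
  linarith

theorem stmt18_general (xθ : ℝ) :
    ConcaveOn ℝ (Set.Ici 0) (fun xb => Ffun xb xθ) ∧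
    Ffun 0 xθ = 0 ∧ Ffun xθ xθ = xθ := by
  refine ⟨?_, by simp [Ffun_eq_integral_tanh], Ffun_self xθ⟩
  simp only [Ffun_eq_integral_tanh]
  refine ConcaveOn.integral (convex_Ici 0) (ae_of_all _ fun x => ?_)
    fun b _ => integrable_tanh_mul_mul_phi1_sub b xθ
  simpa only [smul_eq_mul, mul_comm (phi1 _)] using
    (concaveOn_tanh_mul_mul x).smul (phi1_nonneg (x - xθ))

/-- `F(·, x_θ)` is concave on `[0, ∞)`, with `F(0, x_θ) = 0` and `F(x_θ, x_θ) = x_θ`. -/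
theorem stmt18 (xθ : ℝ) (hθ : 0 ≤ xθ) :
    ConcaveOn ℝ (Set.Ici 0) (fun xb => Ffun xb xθ) ∧
    Ffun 0 xθ = 0 ∧ Ffun xθ xθ = xθ :=
  stmt18_general xθ
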